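/- Let a(z) = ∑_{j=−n₋}^{n₊} a_j z^j be a Laurent polynomial admitting a Wiener–Hopf factorization a(z) = u(z) l(1/z), where u and l are polynomials nonvanishing on the closed unit disk. Let v and w be the Taylor coefficient sequences of the analytic functions 1/u and 1/l on a neighborhood of the closed unit disk (so v, w are absolutely summable and u·v = 1, l·w = 1 as power series), and let b = (b_k)_{k∈ℤ} be the Laurent coefficient sequence of a(z)^{−1} = w(1/z)·v(z), i.e., b_k = ∑_{m−n=k, m,n≥0} v_m w_n. Then T(a) is invertible on ℓ² and T(a)^{−1} = T(b) − H(w)H(v); in particular ‖T(a)^{−1} − T(b)‖₂ ≤ (∑_{j≥0}|w_j|)(∑_{j≥0}|v_j|). -/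

import Mathlib

/-- The bounded operator `T` on `ℓ²` is the Toeplitz operator with symbol coefficients
`a : ℤ → ℂ`, i.e. `(T x)_i = ∑_{j} a_{j-i} x_j` (indices in `ℕ`). -/
def IsToeplitzOp (T : lp (fun _ : ℕ => ℂ) 2 →L[ℂ] lp (fun _ : ℕ => ℂ) 2)
    (a : ℤ → ℂ) : Prop :=
  ∀ (x : lp (fun _ : ℕ => ℂ) 2) (i : ℕ), (T x) i = ∑' j : ℕ, a ((j : ℤ) - (i : ℤ)) * x j

/-- The bounded operator `H` on `ℓ²` is the Hankel operator `H(f)` of the power series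
with coefficients `f : ℕ → ℂ`, i.e. with entries `(H(f))_{i,j} = f_{i+j-1}` in 1-based
indexing (the constant term `f 0` is not used). -/
def IsHankelOpPS (H : lp (fun _ : ℕ => ℂ) 2 →L[ℂ] lp (fun _ : ℕ => ℂ) 2)
    (f : ℕ → ℂ) : Prop :=
  ∀ (x : lp (fun _ : ℕ => ℂ) 2) (i : ℕ), (H x) i = ∑' j : ℕ, f (i + j + 1) * x j

/-!
Write `f₊ = zeroExtend f` for the Laurent sequence of a power series `f`, and `f₋ k = f₊ (-k)`
for that of `f(1/z)`. With the convention `T(c)ᵢⱼ = c (j - i)`, the Wiener–Hopf factorisation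
gives `T(a) = T(u₊) T(l₋)`: no truncation occurs, since `u₊` vanishes at negative indices. Dually,
`T(w₋) T(v₊)` is the Laurent convolution `b = w₋ * v₊` with the middle index restricted to `ℕ`,
and the discarded part is exactly `H(w) H(v)`. Triangular Toeplitz matrices multiply like power
series, so `T(v₊) = T(u₊)⁻¹` and `T(w₋) = T(l₋)⁻¹`, whence `T(a)⁻¹ = T(w₋) T(v₊)`. The four
factors are bounded operators by the Schur test, which also gives `‖H(f)‖ ≤ ‖f‖₁`.
-/

open Finset

local notation "ℓ²" => lp (fun _ : ℕ => ℂ) 2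

namespace lp

theorem hasSum_norm_sq (x : ℓ²) : HasSum (fun i => ‖x i‖ ^ 2) (‖x‖ ^ 2) := by
  simpa using lp.hasSum_norm (p := 2) (by norm_num) x

theorem apply_eq_tsum_single (T : ℓ² →L[ℂ] ℓ²) (x : ℓ²) (i : ℕ) :
    T x i = ∑' j, T (lp.single 2 j 1) i * x j := by
  have hx := ((lp.evalCLM ℂ (fun _ : ℕ => ℂ) 2 i).comp T).hasSum
    (lp.hasSum_single ENNReal.ofNat_ne_top x)
  refine hx.tsum_eq.symm.trans (tsum_congr fun j => ?_)
  have hj : lp.single (E := fun _ : ℕ => ℂ) 2 j (x j) = x j • lp.single 2 j 1 := by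
    rw [← lp.single_smul, smul_eq_mul, mul_one]
  rw [hj, map_smul, smul_eq_mul, mul_comm]
  rfl

theorem ext_single {S T : ℓ² →L[ℂ] ℓ²}
    (h : ∀ i m, S (lp.single 2 m 1) i = T (lp.single 2 m 1) i) : S = T :=
  ContinuousLinearMap.ext fun x => lp.ext <| funext fun i => by
    rw [apply_eq_tsum_single S x i, apply_eq_tsum_single T x i]
    simp only [h]

theorem comp_single_apply (S T : ℓ² →L[ℂ] ℓ²) (m i : ℕ) :
    (S ∘L T) (lp.single 2 m 1) i = ∑' j, S (lp.single 2 j 1) i * T (lp.single 2 m 1) j :=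
  apply_eq_tsum_single S _ i

end lp

section Schur

variable {C : ℝ}

theorem norm_tsum_mul_sq_le {κ : ℕ → ℂ} (hκ : ∀ s : Finset ℕ, ∑ j ∈ s, ‖κ j‖ ≤ C) (x : ℓ²) :
    ‖∑' j, κ j * x j‖ ^ 2 ≤ C * ∑' j, ‖κ j‖ * ‖x j‖ ^ 2 := by
  have hC : 0 ≤ C := by simpa using hκ ∅
  have hκs : Summable fun j => ‖κ j‖ := summable_of_sum_le (fun _ => norm_nonneg _) hκ
  have hx (j : ℕ) : ‖x j‖ ≤ ‖x‖ := lp.norm_apply_le_norm two_ne_zero x j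
  have h1 : Summable fun j => ‖κ j‖ * ‖x j‖ :=
    (hκs.mul_right ‖x‖).of_nonneg_of_le (fun _ => by positivity)
      fun j => mul_le_mul_of_nonneg_left (hx j) (norm_nonneg _)
  have h2 : Summable fun j => ‖κ j‖ * ‖x j‖ ^ 2 :=
    (hκs.mul_right (‖x‖ ^ 2)).of_nonneg_of_le (fun _ => by positivity)
      fun j => mul_le_mul_of_nonneg_left (pow_le_pow_left₀ (norm_nonneg _) (hx j) 2) (norm_nonneg _)
  have hfin (n : ℕ) : (∑ j ∈ range n, ‖κ j‖ * ‖x j‖) ^ 2 ≤ C * ∑' j, ‖κ j‖ * ‖x j‖ ^ 2 :=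
    (sum_sq_le_sum_mul_sum_of_sq_le_mul _ (fun _ _ => norm_nonneg _) (fun _ _ => by positivity)
      fun j _ => le_of_eq (by ring)).trans
      (mul_le_mul (hκ _) (h2.sum_le_tsum _ fun _ _ => by positivity) (by positivity) hC)
  calc ‖∑' j, κ j * x j‖ ^ 2 ≤ (∑' j, ‖κ j‖ * ‖x j‖) ^ 2 := by
        gcongr
        simpa only [norm_mul] using
          norm_tsum_le_tsum_norm (f := fun j => κ j * x j) (by simpa only [norm_mul] using h1)
    _ ≤ C * ∑' j, ‖κ j‖ * ‖x j‖ ^ 2 := le_of_tendsto' (h1.hasSum.tendsto_sum_nat.pow 2) hfin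

variable (K : ℕ → ℕ → ℂ)

theorem sum_norm_tsum_mul_sq_le (hrow : ∀ i (s : Finset ℕ), ∑ j ∈ s, ‖K i j‖ ≤ C)
    (hcol : ∀ j (s : Finset ℕ), ∑ i ∈ s, ‖K i j‖ ≤ C) (x : ℓ²) (s : Finset ℕ) :
    ∑ i ∈ s, ‖∑' j, K i j * x j‖ ^ 2 ≤ (C * ‖x‖) ^ 2 := by
  have hC : 0 ≤ C := by simpa using hrow 0 ∅
  have hx := lp.hasSum_norm_sq x
  have hsum (i : ℕ) : Summable fun j => ‖K i j‖ * ‖x j‖ ^ 2 :=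
    (hx.summable.mul_left C).of_nonneg_of_le (fun _ => by positivity)
      fun j => mul_le_mul_of_nonneg_right (by simpa using hrow i {j}) (sq_nonneg _)
  calc ∑ i ∈ s, ‖∑' j, K i j * x j‖ ^ 2 ≤ ∑ i ∈ s, C * ∑' j, ‖K i j‖ * ‖x j‖ ^ 2 :=
        sum_le_sum fun i _ => norm_tsum_mul_sq_le (hrow i) x
    _ = C * ∑' j, (∑ i ∈ s, ‖K i j‖) * ‖x j‖ ^ 2 := by
        simp_rw [← mul_sum, sum_mul, (Summable.tsum_finsetSum fun i _ => hsum i)]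
    _ ≤ C * ∑' j, C * ‖x j‖ ^ 2 := by
        refine mul_le_mul_of_nonneg_left (Summable.tsum_le_tsum (fun j => ?_) ?_
          (hx.summable.mul_left C)) hC
        · exact mul_le_mul_of_nonneg_right (hcol j s) (sq_nonneg _)
        · simpa only [sum_mul] using summable_sum fun i _ => hsum i
    _ = (C * ‖x‖) ^ 2 := by rw [tsum_mul_left, hx.tsum_eq]; ring

theorem exists_apply_eq_tsum_of_schur (hrow : ∀ i (s : Finset ℕ), ∑ j ∈ s, ‖K i j‖ ≤ C)
    (hcol : ∀ j (s : Finset ℕ), ∑ i ∈ s, ‖K i j‖ ≤ C) :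
    ∃ T : ℓ² →L[ℂ] ℓ², ∀ x i, T x i = ∑' j, K i j * x j := by
  have hC : 0 ≤ C := by simpa using hrow 0 ∅
  have hsum (x : ℓ²) (i : ℕ) : Summable fun j => K i j * x j := by
    refine Summable.of_norm_bounded
      ((summable_of_sum_le (fun _ => norm_nonneg _) (hrow i)).mul_right ‖x‖) fun j => ?_
    rw [norm_mul]
    exact mul_le_mul_of_nonneg_left (lp.norm_apply_le_norm two_ne_zero x j) (norm_nonneg _)
  have hmem (x : ℓ²) : Memℓp (fun i => ∑' j, K i j * x j) 2 :=
    memℓp_gen' (C := (C * ‖x‖) ^ 2) fun s => by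
      simpa using sum_norm_tsum_mul_sq_le K hrow hcol x s
  let L : ℓ² →ₗ[ℂ] ℓ² :=
    { toFun := fun x => ⟨_, hmem x⟩
      map_add' := fun x y => lp.ext <| funext fun i => by
        show ∑' j, K i j * (x j + y j) = ∑' j, K i j * x j + ∑' j, K i j * y j
        simp only [mul_add, (hsum x i).tsum_add (hsum y i)]
      map_smul' := fun c x => lp.ext <| funext fun i => by
        show ∑' j, K i j * (c * x j) = c * ∑' j, K i j * x j
        simp only [mul_left_comm _ c, tsum_mul_left] }
  refine ⟨L.mkContinuous C fun x => ?_, fun x i => rfl⟩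
  refine lp.norm_le_of_forall_sum_le (by norm_num) (by positivity) fun s => ?_
  simp only [ENNReal.toReal_ofNat, Real.rpow_two]
  exact sum_norm_tsum_mul_sq_le K hrow hcol x s

theorem opNorm_le_of_schur (hrow : ∀ i (s : Finset ℕ), ∑ j ∈ s, ‖K i j‖ ≤ C)
    (hcol : ∀ j (s : Finset ℕ), ∑ i ∈ s, ‖K i j‖ ≤ C) {T : ℓ² →L[ℂ] ℓ²}
    (hT : ∀ x i, T x i = ∑' j, K i j * x j) : ‖T‖ ≤ C := by
  have hC : 0 ≤ C := by simpa using hrow 0 ∅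
  refine T.opNorm_le_bound hC fun x => ?_
  refine lp.norm_le_of_forall_sum_le (by norm_num) (by positivity) fun s => ?_
  simpa [hT] using sum_norm_tsum_mul_sq_le K hrow hcol x s

end Schur

theorem sum_norm_comp_le_tsum {ι E : Type*} [SeminormedAddCommGroup E] {c : ι → E}
    (hc : Summable fun k => ‖c k‖) {φ : ℕ → ι} (hφ : φ.Injective) (s : Finset ℕ) :
    ∑ j ∈ s, ‖c (φ j)‖ ≤ ∑' k, ‖c k‖ :=
  ((hc.comp_injective hφ).sum_le_tsum s fun _ _ => norm_nonneg _).trans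
    (tsum_comp_le_tsum_of_inj hc (fun _ => norm_nonneg _) hφ)

theorem exists_isToeplitzOp {c : ℤ → ℂ} (hc : Summable fun k => ‖c k‖) :
    ∃ T, IsToeplitzOp T c :=
  exists_apply_eq_tsum_of_schur (fun i j => c (j - i))
    (fun i => sum_norm_comp_le_tsum hc fun _ _ h => by simpa using h)
    (fun j => sum_norm_comp_le_tsum hc fun _ _ h => by simpa using h)

namespace IsToeplitzOp

variable {T : ℓ² →L[ℂ] ℓ²} {c : ℤ → ℂ}

theorem single_apply (hT : IsToeplitzOp T c) (m i : ℕ) : T (lp.single 2 m 1) i = c (m - i) := by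
  rw [hT, tsum_eq_single m fun j hj => by simp [hj]]
  simp

theorem comp_single_apply {S : ℓ² →L[ℂ] ℓ²} {d : ℤ → ℂ} (hS : IsToeplitzOp S c)
    (hT : IsToeplitzOp T d) (m i : ℕ) :
    (S ∘L T) (lp.single 2 m 1) i = ∑' j : ℕ, c (j - i) * d (m - j) := by
  simp only [lp.comp_single_apply, hS.single_apply, hT.single_apply]

end IsToeplitzOp

namespace IsHankelOpPS

variable {H : ℓ² →L[ℂ] ℓ²} {f : ℕ → ℂ}

theorem single_apply (hH : IsHankelOpPS H f) (m i : ℕ) :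
    H (lp.single 2 m 1) i = f (i + m + 1) := by
  rw [hH, tsum_eq_single m fun j hj => by simp [hj]]
  simp

theorem norm_le (hH : IsHankelOpPS H f) (hf : Summable fun n => ‖f n‖) : ‖H‖ ≤ ∑' n, ‖f n‖ :=
  opNorm_le_of_schur (fun i j => f (i + j + 1))
    (fun i => sum_norm_comp_le_tsum hf fun _ _ h => by simpa using h)
    (fun j => sum_norm_comp_le_tsum hf fun _ _ h => by simpa using h) hH

end IsHankelOpPS

def zeroExtend {R : Type*} [Zero R] (f : ℕ → R) (k : ℤ) : R := if 0 ≤ k then f k.toNat else 0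

namespace zeroExtend

section Zero

variable {R : Type*} [Zero R] (f : ℕ → R)

@[simp] theorem natCast (n : ℕ) : zeroExtend f n = f n := by
  simp [zeroExtend]

theorem of_neg {k : ℤ} (hk : k < 0) : zeroExtend f k = 0 :=
  if_neg (by omega)

theorem natCast_sub {i j : ℕ} (h : i ≤ j) : zeroExtend f ((j : ℤ) - i) = f (j - i) := by
  rw [← Nat.cast_sub h, natCast]

end Zero

theorem eq_sum_ite {R : Type*} [AddCommMonoid R] {f : ℕ → R} {N : ℕ} (hf : ∀ n, N < n → f n = 0)
    (k : ℤ) : zeroExtend f k = ∑ n ∈ range (N + 1), if (n : ℤ) = k then f n else 0 := by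
  rcases lt_or_ge k 0 with hk | hk
  · rw [of_neg f hk, sum_eq_zero fun n _ => if_neg (by omega)]
  · lift k to ℕ using hk
    simp only [natCast, Nat.cast_inj, sum_ite_eq', mem_range]
    split_ifs with h
    · rfl
    · exact hf k (by omega)

variable {f : ℕ → ℂ}

theorem norm_le (hf : Summable fun n => ‖f n‖) (k : ℤ) : ‖zeroExtend f k‖ ≤ ∑' n, ‖f n‖ := by
  unfold zeroExtend
  split_ifs
  · exact hf.le_tsum _ fun _ _ => norm_nonneg _
  · simpa using tsum_nonneg fun n => norm_nonneg (f n)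

theorem summable_norm (hf : Summable fun n => ‖f n‖) : Summable fun k => ‖zeroExtend f k‖ := by
  refine (Nat.cast_injective.summable_iff fun k hk => ?_).mp
    (by simpa [Function.comp_def] using hf)
  rw [of_neg f (by simpa using hk), norm_zero]

theorem tsum_sub_mul (f ψ : ℕ → ℂ) (i : ℕ) :
    ∑' j : ℕ, zeroExtend f (j - i) * ψ j = ∑' k : ℕ, f k * ψ (k + i) := by
  rw [← (add_left_injective i).tsum_eq (f := fun j : ℕ => zeroExtend f (j - i) * ψ j)]
  · simp
  · intro j hj
    rcases lt_or_ge j i with h | h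
    · simp [of_neg f (by omega : (j : ℤ) - i < 0)] at hj
    · exact ⟨j - i, Nat.sub_add_cancel h⟩

end zeroExtend

theorem tsum_zeroExtend_mul_zeroExtend (f g : ℕ → ℂ) (i m : ℕ) :
    ∑' j : ℕ, zeroExtend f (j - i) * zeroExtend g (m - j) =
      zeroExtend (fun n => PowerSeries.coeff n (PowerSeries.mk f * PowerSeries.mk g)) (m - i) := by
  rw [zeroExtend.tsum_sub_mul]
  rcases lt_or_ge m i with h | h
  · rw [zeroExtend.of_neg _ (by omega)]
    refine (tsum_congr fun k => ?_).trans tsum_zero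
    rw [zeroExtend.of_neg g (by omega), mul_zero]
  obtain ⟨n, rfl⟩ := Nat.exists_eq_add_of_le h
  rw [zeroExtend.natCast_sub _ h, Nat.add_sub_cancel_left, PowerSeries.coeff_mul,
    Finset.Nat.sum_antidiagonal_eq_sum_range_succ
      (fun p q => PowerSeries.coeff p (PowerSeries.mk f) * PowerSeries.coeff q (PowerSeries.mk g)),
    tsum_eq_sum (s := range (n + 1)) fun k hk => by
      rw [zeroExtend.of_neg g (by simp only [mem_range] at hk; omega), mul_zero]]
  refine sum_congr rfl fun k hk => ?_
  rw [zeroExtend.natCast_sub _ (by simp only [mem_range] at hk; omega)]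
  simp only [PowerSeries.coeff_mk]
  congr 2
  omega

theorem tsum_zeroExtend_mul_zeroExtend_neg {f g : ℕ → ℂ} {N M : ℕ} (hf : ∀ n, N < n → f n = 0)
    (hg : ∀ n, M < n → g n = 0) (i m : ℕ) :
    ∑' j : ℕ, zeroExtend f (j - i) * zeroExtend g (-(m - j)) =
      ∑ p ∈ range (N + 1), ∑ q ∈ range (M + 1), if (p : ℤ) - q = m - i then f p * g q else 0 := by
  rw [zeroExtend.tsum_sub_mul, tsum_eq_sum (s := range (N + 1)) fun p hp => by
    rw [hf p (by simpa using hp), zero_mul]]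
  refine sum_congr rfl fun p _ => ?_
  rw [zeroExtend.eq_sum_ite hg, mul_sum]
  refine sum_congr rfl fun q _ => ?_
  by_cases h : (p : ℤ) - q = m - i
  · rw [if_pos (by push_cast; omega), if_pos h]
  · rw [if_neg (by push_cast; omega), if_neg h, mul_zero]

theorem tsum_prod_ite_sub_eq {v w : ℕ → ℂ} (hv : Summable fun n => ‖v n‖)
    (hw : Summable fun n => ‖w n‖) (k : ℤ) :
    ∑' p : ℕ × ℕ, (if (p.1 : ℤ) - p.2 = k then v p.1 * w p.2 else 0) =
      ∑' q : ℕ, w q * zeroExtend v (q + k) := by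
  have hs : Summable fun p : ℕ × ℕ => if (p.2 : ℤ) - p.1 = k then v p.2 * w p.1 else 0 := by
    refine (hw.mul_of_nonneg hv (fun _ => norm_nonneg _) fun _ => norm_nonneg _).of_norm_bounded
      fun p => ?_
    split_ifs
    · rw [norm_mul, mul_comm]
    · simp only [norm_zero]; positivity
  rw [← (Equiv.prodComm ℕ ℕ).tsum_eq]
  refine (hs.tsum_prod' fun q => hs.prod_factor q).trans (tsum_congr fun q => ?_)
  rcases lt_or_ge ((q : ℤ) + k) 0 with h | h
  · rw [zeroExtend.of_neg v h, mul_zero]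
    exact (tsum_congr fun p => if_neg (by omega)).trans tsum_zero
  · obtain ⟨n, hn⟩ := Int.eq_ofNat_of_zero_le h
    rw [hn, zeroExtend.natCast, tsum_eq_single n fun p hp => if_neg (by omega), if_pos (by omega),
      mul_comm]

theorem tsum_zeroExtend_neg_mul_zeroExtend {v w : ℕ → ℂ} (hv : Summable fun n => ‖v n‖)
    (hw : Summable fun n => ‖w n‖) (i m : ℕ) :
    ∑' j : ℕ, zeroExtend w (-(j - i)) * zeroExtend v (m - j) =
      ∑' q : ℕ, w q * zeroExtend v (q + (m - i)) - ∑' j : ℕ, w (i + j + 1) * v (j + m + 1) := by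
  have hs : Summable fun q : ℕ => w q * zeroExtend v (q + (m - i)) :=
    (hw.mul_right _).of_norm_bounded fun q => by
      rw [norm_mul]
      exact mul_le_mul_of_nonneg_left (zeroExtend.norm_le hv _) (norm_nonneg _)
  have htail : ∑' j : ℕ, w (j + (i + 1)) * zeroExtend v ((j + (i + 1) : ℕ) + (m - i)) =
      ∑' j : ℕ, w (i + j + 1) * v (j + m + 1) := tsum_congr fun j => by
    rw [show ((j + (i + 1) : ℕ) : ℤ) + (m - i) = (j + m + 1 : ℕ) by push_cast; ring,
      zeroExtend.natCast, show j + (i + 1) = i + j + 1 by ring]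
  rw [← hs.sum_add_tsum_nat_add (i + 1), htail, add_sub_cancel_right,
    tsum_eq_sum (s := range (i + 1)) fun j hj => by
      rw [zeroExtend.of_neg w (by simp only [mem_range] at hj; omega), zero_mul],
    ← sum_range_reflect (fun q => w q * zeroExtend v (q + (m - i)))]
  refine sum_congr rfl fun j hj => ?_
  have hji : j ≤ i := by simp only [mem_range] at hj; omega
  rw [neg_sub, zeroExtend.natCast_sub _ hji, show i + 1 - 1 - j = i - j by omega]
  congr 2
  push_cast [Nat.cast_sub hji]
  ring

theorem PowerSeries.mk_mul_mk_eq_one {R : Type*} [Semiring R] {f g : ℕ → R}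
    (h : ∀ n, ∑ i ∈ range (n + 1), f i * g (n - i) = if n = 0 then 1 else 0) :
    PowerSeries.mk f * PowerSeries.mk g = 1 := by
  ext n
  rw [PowerSeries.coeff_mul, Finset.Nat.sum_antidiagonal_eq_sum_range_succ
    (fun p q => PowerSeries.coeff p (PowerSeries.mk f) * PowerSeries.coeff q (PowerSeries.mk g))]
  simpa [PowerSeries.coeff_one] using h n

theorem zeroExtend_coeff_one {R : Type*} [Semiring R] (k : ℤ) :
    zeroExtend (fun n => PowerSeries.coeff n (1 : PowerSeries R)) k = if k = 0 then 1 else 0 := by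
  simp only [zeroExtend, PowerSeries.coeff_one]
  split_ifs <;> first | rfl | (exfalso; omega)

theorem summable_norm_of_eq_zero_of_lt {f : ℕ → ℂ} {N : ℕ} (hf : ∀ n, N < n → f n = 0) :
    Summable fun n => ‖f n‖ :=
  summable_of_ne_finset_zero (s := range (N + 1)) fun n hn => by
    simp [hf n (by simpa using hn)]

namespace IsToeplitzOp

variable {S T : ℓ² →L[ℂ] ℓ²} {f g : ℕ → ℂ}

theorem comp_eq_one (hS : IsToeplitzOp S (zeroExtend f)) (hT : IsToeplitzOp T (zeroExtend g))
    (hfg : PowerSeries.mk f * PowerSeries.mk g = 1) : S ∘L T = 1 :=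
  lp.ext_single fun i m => by
    rw [hS.comp_single_apply hT, tsum_zeroExtend_mul_zeroExtend, hfg, zeroExtend_coeff_one]
    simp only [one_apply_eq_self, lp.single_apply, Pi.single_apply]
    exact if_congr (by omega) rfl rfl

theorem comp_eq_one_of_neg (hS : IsToeplitzOp S fun k => zeroExtend f (-k))
    (hT : IsToeplitzOp T fun k => zeroExtend g (-k))
    (hfg : PowerSeries.mk f * PowerSeries.mk g = 1) : S ∘L T = 1 :=
  lp.ext_single fun i m => by
    simp only [hS.comp_single_apply hT, neg_sub, mul_comm (zeroExtend f _)]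
    rw [tsum_zeroExtend_mul_zeroExtend, mul_comm, hfg, zeroExtend_coeff_one]
    simp only [one_apply_eq_self, lp.single_apply, Pi.single_apply]
    exact if_congr (by omega) rfl rfl

theorem eq_comp_of_factorization {a : ℤ → ℂ} {N M : ℕ} (hf : ∀ n, N < n → f n = 0)
    (hg : ∀ n, M < n → g n = 0)
    (ha : ∀ k : ℤ, a k = ∑ p ∈ range (N + 1), ∑ q ∈ range (M + 1),
      if (p : ℤ) - q = k then f p * g q else 0)
    {A : ℓ² →L[ℂ] ℓ²} (hA : IsToeplitzOp A a) (hS : IsToeplitzOp S (zeroExtend f))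
    (hT : IsToeplitzOp T fun k => zeroExtend g (-k)) : A = S ∘L T :=
  lp.ext_single fun i m => by
    rw [hA.single_apply, hS.comp_single_apply hT, ha]
    exact (tsum_zeroExtend_mul_zeroExtend_neg hf hg i m).symm

theorem sub_comp_eq_comp (hf : Summable fun n => ‖f n‖) (hg : Summable fun n => ‖g n‖)
    {b : ℤ → ℂ} (hb : ∀ k : ℤ, b k = ∑' p : ℕ × ℕ,
      if (p.1 : ℤ) - p.2 = k then f p.1 * g p.2 else 0)
    {B Hf Hg : ℓ² →L[ℂ] ℓ²} (hB : IsToeplitzOp B b) (hHf : IsHankelOpPS Hf f)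
    (hHg : IsHankelOpPS Hg g) (hS : IsToeplitzOp S fun k => zeroExtend g (-k))
    (hT : IsToeplitzOp T (zeroExtend f)) : B - Hg ∘L Hf = S ∘L T :=
  lp.ext_single fun i m => by
    rw [hS.comp_single_apply hT, tsum_zeroExtend_neg_mul_zeroExtend hf hg, sub_apply,
      lp.coeFn_sub, Pi.sub_apply, hB.single_apply, hb, tsum_prod_ite_sub_eq hf hg,
      lp.comp_single_apply]
    simp only [hHf.single_apply, hHg.single_apply]

end IsToeplitzOp

theorem toeplitz_inverse_formula_general
    (nm np : ℕ) (a : ℤ → ℂ)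
    (u l : ℕ → ℂ)
    (hu_supp : ∀ i : ℕ, np < i → u i = 0) (hl_supp : ∀ i : ℕ, nm < i → l i = 0)
    (hfact : ∀ k : ℤ, a k =
      ∑ i ∈ Finset.range (np + 1), ∑ j ∈ Finset.range (nm + 1),
        if (i : ℤ) - (j : ℤ) = k then u i * l j else 0)
    (v w : ℕ → ℂ)
    (hv_sum : Summable fun k : ℕ => ‖v k‖) (hw_sum : Summable fun k : ℕ => ‖w k‖)
    (huv : ∀ n : ℕ, ∑ i ∈ Finset.range (n + 1), u i * v (n - i) = if n = 0 then 1 else 0)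
    (hlw : ∀ n : ℕ, ∑ i ∈ Finset.range (n + 1), l i * w (n - i) = if n = 0 then 1 else 0)
    (b : ℤ → ℂ)
    (hb : ∀ k : ℤ, b k = ∑' p : ℕ × ℕ,
      if (p.1 : ℤ) - (p.2 : ℤ) = k then v p.1 * w p.2 else 0)
    (Ta Tb Hw Hv : lp (fun _ : ℕ => ℂ) 2 →L[ℂ] lp (fun _ : ℕ => ℂ) 2)
    (hTa : IsToeplitzOp Ta a) (hTb : IsToeplitzOp Tb b)
    (hHw : IsHankelOpPS Hw w) (hHv : IsHankelOpPS Hv v) :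
    IsUnit Ta ∧
    Ta ∘L (Tb - Hw ∘L Hv) = 1 ∧ (Tb - Hw ∘L Hv) ∘L Ta = 1 ∧
    ‖Hw ∘L Hv‖ ≤ (∑' j : ℕ, ‖w j‖) * (∑' j : ℕ, ‖v j‖) := by
  have hu := summable_norm_of_eq_zero_of_lt hu_supp
  have hl := summable_norm_of_eq_zero_of_lt hl_supp
  have huv' := PowerSeries.mk_mul_mk_eq_one huv
  have hlw' := PowerSeries.mk_mul_mk_eq_one hlw
  obtain ⟨TU, hTU⟩ := exists_isToeplitzOp (zeroExtend.summable_norm hu)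
  obtain ⟨TV, hTV⟩ := exists_isToeplitzOp (zeroExtend.summable_norm hv_sum)
  obtain ⟨TL, hTL⟩ :=
    exists_isToeplitzOp ((zeroExtend.summable_norm hl).comp_injective neg_injective)
  obtain ⟨TW, hTW⟩ :=
    exists_isToeplitzOp ((zeroExtend.summable_norm hw_sum).comp_injective neg_injective)
  let U : (ℓ² →L[ℂ] ℓ²)ˣ :=
    ⟨TU, TV, hTU.comp_eq_one hTV huv', hTV.comp_eq_one hTU ((mul_comm _ _).trans huv')⟩
  let L : (ℓ² →L[ℂ] ℓ²)ˣ :=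
    ⟨TL, TW, hTL.comp_eq_one_of_neg hTW hlw',
      hTW.comp_eq_one_of_neg hTL ((mul_comm _ _).trans hlw')⟩
  have hTa_eq : Ta = ↑(U * L) := hTa.eq_comp_of_factorization hu_supp hl_supp hfact hTU hTL
  have hS_eq : Tb - Hw ∘L Hv = ↑(U * L)⁻¹ := by
    rw [mul_inv_rev]
    exact hTb.sub_comp_eq_comp hv_sum hw_sum hb hHv hHw hTW hTV
  rw [hS_eq, hTa_eq]
  refine ⟨(U * L).isUnit, (U * L).mul_inv, (U * L).inv_mul, ?_⟩
  exact (ContinuousLinearMap.opNorm_comp_le _ _).trans <|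
    mul_le_mul (hHw.norm_le hw_sum) (hHv.norm_le hv_sum) (norm_nonneg _)
      (tsum_nonneg fun _ => norm_nonneg _)

/-- Let `a(z) = ∑_{j=-n₋}^{n₊} a_j z^j` admit a Wiener–Hopf factorization
`a(z) = u(z) l(1/z)` with `u, l` polynomials nonvanishing on the closed unit disk, let
`v = 1/u`, `w = 1/l` be the (absolutely summable) power-series inverses, and let `b` be
the Laurent coefficient sequence of `a(z)⁻¹ = w(1/z) v(z)`. Then `T(a)` is invertible on
`ℓ²` with `T(a)⁻¹ = T(b) - H(w) H(v)`; in particular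
`‖T(a)⁻¹ - T(b)‖₂ ≤ (∑_{j≥0} |w_j|) (∑_{j≥0} |v_j|)`. -/
theorem toeplitz_inverse_formula
    (nm np : ℕ) (a : ℤ → ℂ)
    (hsupp : ∀ k : ℤ, (k < -(nm : ℤ) ∨ (np : ℤ) < k) → a k = 0)
    (u l : ℕ → ℂ)
    (hu_supp : ∀ i : ℕ, np < i → u i = 0) (hl_supp : ∀ i : ℕ, nm < i → l i = 0)
    (hu_nv : ∀ z : ℂ, ‖z‖ ≤ 1 → ∑ i ∈ Finset.range (np + 1), u i * z ^ i ≠ 0)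
    (hl_nv : ∀ z : ℂ, ‖z‖ ≤ 1 → ∑ i ∈ Finset.range (nm + 1), l i * z ^ i ≠ 0)
    (hfact : ∀ k : ℤ, a k =
      ∑ i ∈ Finset.range (np + 1), ∑ j ∈ Finset.range (nm + 1),
        if (i : ℤ) - (j : ℤ) = k then u i * l j else 0)
    (v w : ℕ → ℂ)
    (hv_sum : Summable fun k : ℕ => ‖v k‖) (hw_sum : Summable fun k : ℕ => ‖w k‖)
    (huv : ∀ n : ℕ, ∑ i ∈ Finset.range (n + 1), u i * v (n - i) = if n = 0 then 1 else 0)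
    (hlw : ∀ n : ℕ, ∑ i ∈ Finset.range (n + 1), l i * w (n - i) = if n = 0 then 1 else 0)
    (b : ℤ → ℂ)
    (hb : ∀ k : ℤ, b k = ∑' p : ℕ × ℕ,
      if (p.1 : ℤ) - (p.2 : ℤ) = k then v p.1 * w p.2 else 0)
    (Ta Tb Hw Hv : lp (fun _ : ℕ => ℂ) 2 →L[ℂ] lp (fun _ : ℕ => ℂ) 2)
    (hTa : IsToeplitzOp Ta a) (hTb : IsToeplitzOp Tb b)
    (hHw : IsHankelOpPS Hw w) (hHv : IsHankelOpPS Hv v) :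
    IsUnit Ta ∧
    Ta ∘L (Tb - Hw ∘L Hv) = 1 ∧ (Tb - Hw ∘L Hv) ∘L Ta = 1 ∧
    ‖Hw ∘L Hv‖ ≤ (∑' j : ℕ, ‖w j‖) * (∑' j : ℕ, ‖v j‖) :=
  toeplitz_inverse_formula_general nm np a u l hu_supp hl_supp hfact v w hv_sum hw_sum huv hlw b hb
    Ta Tb Hw Hv hTa hTb hHw hHv
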